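/- arXiv:1705.04851 — 3 statements merged into one kernel-verified Lean document; each statement's English description precedes it below -/
import Mathlib

section
/- Let (X,d,μ) be a metric measure space with a Radon measure μ satisfying the doubling condition μ(B(x,2r)) ≤ K·μ(B(x,r)) for all x ∈ X and r > 0, where 0 < μ(B(x,r)) < ∞ for all x and r. Then for every natural number i, every natural number k with k ≤ 2^i, and every x ∈ X, there exists a radius r with 2^i ≤ r < 2^{i+1} such that μ(B(x, r+k) \ B(x, r)) ≤ C·k·μ(B(x, r))/r, where C is a constant depending only on the doubling constant K. -/
/-!
Split `[a, 2a)` into `m = ⌊a / s⌋` consecutive annuli of width `s`. They are disjoint and lie in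
`B(x, 2a)`, so one of them has measure at most `μ(B(x, 2a)) / m ≤ K μ(B(x, r)) / m`, where `r ≥ a`
is its inner radius. Since `r < 2a < 4 s m`, this is at most `4 K s μ(B(x, r)) / r`, and `K ≤ K²`
because a doubling constant of a ball of positive finite measure is at least `1`.
-/

open MeasureTheory Metric ENNReal

section Annuli

open Function

variable {X : Type*} [PseudoMetricSpace X] [MeasurableSpace X] {μ : Measure X}

lemma one_le_of_measure_closedBall_two_mul_le {K : ℝ≥0∞} {x : X} {r : ℝ} (hr : 0 ≤ r)
    (h0 : μ (closedBall x r) ≠ 0) (hfin : μ (closedBall x r) ≠ ∞)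
    (hK : μ (closedBall x (2 * r)) ≤ K * μ (closedBall x r)) : 1 ≤ K := by
  refine (ENNReal.mul_le_mul_iff_left h0 hfin).1 ?_
  rw [one_mul]
  exact (measure_mono (closedBall_subset_closedBall (by linarith))).trans hK

lemma exists_natCast_mul_measure_annulus_le [OpensMeasurableSpace X] (x : X) (a : ℝ) {s : ℝ}
    (hs : 0 ≤ s) {m : ℕ} (hm : 0 < m) :
    ∃ j < m, (m : ℝ≥0∞) * μ (closedBall x (a + (j + 1) * s) \ closedBall x (a + j * s))
      ≤ μ (closedBall x (a + m * s)) := by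
  set A : ℕ → Set X := fun j => closedBall x (a + (j + 1) * s) \ closedBall x (a + j * s)
  have hdisj : Pairwise (Disjoint on A) := by
    refine (pairwise_disjoint_on A).2 fun j l hjl => ?_
    have hjl' : (j : ℝ) + 1 ≤ l := by exact_mod_cast hjl
    exact Disjoint.mono_left
      (Set.sdiff_subset.trans (closedBall_subset_closedBall (by nlinarith))) Set.disjoint_sdiff_right
  have hsub : ∀ j ∈ Finset.range m, A j ⊆ closedBall x (a + m * s) := fun j hj => by
    have hjm : (j : ℝ) + 1 ≤ m := by exact_mod_cast Finset.mem_range.1 hj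
    exact Set.sdiff_subset.trans (closedBall_subset_closedBall (by nlinarith))
  have hsum : ∑ j ∈ Finset.range m, μ (A j) ≤ μ (closedBall x (a + m * s)) := by
    rw [← measure_biUnion_finset (hdisj.set_pairwise _)
      fun j _ => measurableSet_closedBall.diff measurableSet_closedBall]
    exact measure_mono (Set.iUnion₂_subset hsub)
  obtain ⟨j, hj, hle⟩ := ENNReal.exists_le_of_sum_le (Finset.nonempty_range_iff.2 hm.ne')
    (f := fun j => (m : ℝ≥0∞) * μ (A j)) (g := fun _ => μ (closedBall x (a + m * s))) (by
      rw [← Finset.mul_sum, Finset.sum_const, Finset.card_range, nsmul_eq_mul]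
      gcongr)
  exact ⟨j, Finset.mem_range.1 hj, hle⟩

theorem exists_radius_measure_annulus_le [OpensMeasurableSpace X] {K : ℝ≥0∞} (hK : 1 ≤ K)
    {x : X} {a s : ℝ} (hdoubling : μ (closedBall x (2 * a)) ≤ K * μ (closedBall x a))
    (hs : 0 < s) (hsa : s ≤ a) :
    ∃ r, a ≤ r ∧ r < 2 * a ∧ μ (closedBall x (r + s) \ closedBall x r)
      ≤ 4 * K ^ 2 * ENNReal.ofReal s * μ (closedBall x r) / ENNReal.ofReal r := by
  set m := ⌊a / s⌋₊
  have hm : 0 < m := Nat.floor_pos.2 ((one_le_div hs).2 hsa)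
  have hm1 : (1 : ℝ) ≤ m := by exact_mod_cast hm
  have hms : m * s ≤ a := (le_div_iff₀ hs).1 (Nat.floor_le (div_nonneg (hs.le.trans hsa) hs.le))
  have hlt : a < (m + 1) * s := (div_lt_iff₀ hs).1 (Nat.lt_floor_add_one _)
  obtain ⟨j, hj, hA⟩ := exists_natCast_mul_measure_annulus_le (μ := μ) x a hs.le hm
  have hjm : (j : ℝ) + 1 ≤ m := by exact_mod_cast hj
  set r := a + j * s
  have har : a ≤ r := le_add_of_nonneg_right (by positivity)
  have hr4 : r ≤ 4 * s * m := by nlinarith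
  rw [show a + (j + 1) * s = r + s by ring] at hA
  have hAK : (m : ℝ≥0∞) * μ (closedBall x (r + s) \ closedBall x r) ≤ K * μ (closedBall x r) :=
    calc _ ≤ μ (closedBall x (a + m * s)) := hA
      _ ≤ μ (closedBall x (2 * a)) := measure_mono (closedBall_subset_closedBall (by linarith))
      _ ≤ K * μ (closedBall x a) := hdoubling
      _ ≤ K * μ (closedBall x r) := by gcongr
  refine ⟨r, har, by nlinarith, ?_⟩
  have hr0 : ENNReal.ofReal r ≠ 0 := by simp only [ne_eq, ofReal_eq_zero, not_le]; linarith
  rw [ENNReal.le_div_iff_mul_le (Or.inl hr0) (Or.inl ofReal_ne_top)]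
  calc μ (closedBall x (r + s) \ closedBall x r) * ENNReal.ofReal r
      ≤ μ (closedBall x (r + s) \ closedBall x r) * (4 * ENNReal.ofReal s * m) := by
        gcongr
        rw [← ofReal_natCast, ← ENNReal.ofReal_ofNat, ← ofReal_mul (by norm_num),
          ← ofReal_mul (by positivity)]
        exact ofReal_le_ofReal hr4
    _ = 4 * ENNReal.ofReal s * (m * μ (closedBall x (r + s) \ closedBall x r)) := by ring
    _ ≤ 4 * ENNReal.ofReal s * (K * μ (closedBall x r)) := by gcongr
    _ ≤ 4 * ENNReal.ofReal s * (K ^ 2 * μ (closedBall x r)) := by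
        gcongr; exact le_self_pow₀ hK two_ne_zero
    _ = 4 * K ^ 2 * ENNReal.ofReal s * μ (closedBall x r) := by ring

end Annuli

/-- Lemma 6.7 of the paper: in a doubling metric measure space, for each scale `2^i`
and each `k ≤ 2^i` one can find a radius `r ∈ [2^i, 2^(i+1))` whose annulus of width `k`
has small relative measure, with constant `C = 4 K ^ 2` depending only on the doubling
constant `K`. -/
theorem stmt0
    (X : Type*) [MetricSpace X] [MeasurableSpace X] [BorelSpace X]
    (μ : Measure X) (K : ℝ≥0∞)
    (hdoubling : ∀ (x : X) (r : ℝ), 0 < r → μ (closedBall x (2 * r)) ≤ K * μ (closedBall x r))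
    (hpos : ∀ (x : X) (r : ℝ), 0 < r → 0 < μ (closedBall x r))
    (hfin : ∀ (x : X) (r : ℝ), 0 < r → μ (closedBall x r) < ∞) :
    ∀ (i k : ℕ), k ≤ 2 ^ i → ∀ x : X,
      ∃ r : ℝ, (2 : ℝ) ^ i ≤ r ∧ r < 2 ^ (i + 1) ∧
        μ (closedBall x (r + k) \ closedBall x r)
          ≤ 4 * K ^ 2 * k * μ (closedBall x r) / ENNReal.ofReal r := by
  intro i k hk x
  have ha : (0 : ℝ) < 2 ^ i := by positivity
  rcases Nat.eq_zero_or_pos k with rfl | hk0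
  · exact ⟨2 ^ i, le_rfl, by rw [pow_succ]; linarith, by simp⟩
  have hK : 1 ≤ K := one_le_of_measure_closedBall_two_mul_le ha.le (hpos x _ ha).ne'
    (hfin x _ ha).ne (hdoubling x _ ha)
  obtain ⟨r, har, hra, hr⟩ := exists_radius_measure_annulus_le hK (hdoubling x _ ha)
    (s := k) (by exact_mod_cast hk0) (by exact_mod_cast hk)
  refine ⟨r, har, by rwa [pow_succ, mul_comm], ?_⟩
  simpa only [ofReal_natCast] using hr
end

section
/- Let G be a compactly generated locally compact group of polynomial growth with symmetric compact generating set V and Haar measure m, so that m(Vⁿ) ≤ k·n^r for constants k > 0, r ∈ ℕ and all n ≥ 1. Suppose additionally there are constants c₁ > 0 and d ∈ ℕ with m(Vⁿ) ≥ c₁·n^d for all n ≥ 1, and m(Vⁿ) ≤ c₂·n^d. Fix a measurable symmetric density f ≥ 0 on G of integral 1 satisfying the Gaussian lower bound f^{⋆k}(g) ≥ c·e^{−d(e,g)²/k}/m(B_{√k}) for all g ∈ B_k and all integers k ≥ 1, where d is the word metric of V and B_r its balls. Then there exists a constant c' > 0 such that for all sufficiently large integers n, the pointwise inequality χ_{B_n}(g)/m(B_n)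 ≤ (c'/(2n²)) Σ_{k=1}^{2n²} f^{⋆k}(g) holds for all g ∈ G. -/
/-!
Since `V` is symmetric, `1 ∈ V²`, so every ball `B_r` lies in `V^⌊r⌋ ∪ V^(⌊r⌋+1)` and the two-sided
growth bounds give `m(B_r) ≍ r^d` for `r ≥ 1`. For `g ∈ B_n` and `n² < k ≤ 2n²` the Gaussian
factor `exp(-d(e,g)²/k)` is at least `e⁻¹` and `m(B_√k) = O(n^d)`, so each of these `n²`
convolution powers is `≳ n^(-d) ≳ 1 / m(B_n)`; all other terms of the sum are nonnegative.
-/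

open MeasureTheory ENNReal Pointwise Set

section WordMetric

variable {G : Type*} [Group G] {V : Set G}

noncomputable def wordLength (V : Set G) (g : G) : ℕ := sInf {n : ℕ | g ∈ V ^ n}

def wordBall (V : Set G) (r : ℝ) : Set G := {g | (wordLength V g : ℝ) ≤ r}

lemma one_mem_sq_of_inv_eq (hsymm : V⁻¹ = V) (hne : V.Nonempty) : (1 : G) ∈ V ^ 2 := by
  obtain ⟨v, hv⟩ := hne
  have hv' : v⁻¹ ∈ V := hsymm ▸ Set.inv_mem_inv.mpr hv
  simpa [sq] using Set.mul_mem_mul hv hv'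

lemma nonempty_of_iUnion_pow_eq_univ (hgen : ⋃ n : ℕ, V ^ (n + 1) = univ) : V.Nonempty := by
  obtain ⟨_, ⟨n, rfl⟩, h1⟩ := (hgen ▸ mem_univ (1 : G) : (1 : G) ∈ ⋃ n : ℕ, V ^ (n + 1))
  rw [nonempty_iff_ne_empty]
  rintro rfl
  simp at h1

lemma pow_subset_pow_union_pow_succ {M : Type*} [Monoid M] {s : Set M} (h1 : (1 : M) ∈ s ^ 2)
    {j n : ℕ} (hjn : j ≤ n) : s ^ j ⊆ s ^ n ∪ s ^ (n + 1) := by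
  have hstep (t : ℕ) : s ^ j ⊆ s ^ (j + 2 * t) := by
    rw [pow_add, pow_mul]
    exact subset_mul_left _ (one_mem_pow h1)
  rcases Nat.even_or_odd (n - j) with ⟨t, ht⟩ | ⟨t, ht⟩
  · exact (show n = j + 2 * t by omega) ▸ (hstep t).trans subset_union_left
  · exact (show n + 1 = j + 2 * (t + 1) by omega) ▸ (hstep (t + 1)).trans subset_union_right

lemma wordLength_le_of_mem {g : G} {n : ℕ} (hg : g ∈ V ^ n) : wordLength V g ≤ n :=
  Nat.sInf_le hg

lemma mem_pow_wordLength (hgen : ⋃ n : ℕ, V ^ (n + 1) = univ) (g : G) :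
    g ∈ V ^ wordLength V g := by
  obtain ⟨_, ⟨n, rfl⟩, hn⟩ := (hgen ▸ mem_univ g : g ∈ ⋃ n : ℕ, V ^ (n + 1))
  exact Nat.sInf_mem (s := {n : ℕ | g ∈ V ^ n}) ⟨n + 1, hn⟩

lemma pow_subset_wordBall {n : ℕ} {r : ℝ} (hnr : (n : ℝ) ≤ r) : V ^ n ⊆ wordBall V r :=
  fun _ hg => (Nat.cast_le.mpr (wordLength_le_of_mem hg)).trans hnr

lemma wordBall_subset_pow_union (hsymm : V⁻¹ = V) (hgen : ⋃ n : ℕ, V ^ (n + 1) = univ) (r : ℝ) :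
    wordBall V r ⊆ V ^ ⌊r⌋₊ ∪ V ^ (⌊r⌋₊ + 1) := fun g hg =>
  pow_subset_pow_union_pow_succ
    (one_mem_sq_of_inv_eq hsymm (nonempty_of_iUnion_pow_eq_univ hgen))
    (Nat.le_floor hg) (mem_pow_wordLength hgen g)

end WordMetric

section Growth

variable {G : Type*} [Group G] [MeasurableSpace G] {m : Measure G} {V : Set G} {c₁ c₂ : ℝ} {d : ℕ}

lemma measure_pow_ne_top (hc₁ : 0 < c₁)
    (hlower : ∀ n : ℕ, 1 ≤ n → c₁ * (n : ℝ) ^ d ≤ m.real (V ^ n)) {n : ℕ} (hn : 1 ≤ n) :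
    m (V ^ n) ≠ ∞ := by
  have hn' : (0 : ℝ) < n := by exact_mod_cast hn
  exact (ENNReal.toReal_pos_iff.mp ((by positivity : 0 < c₁ * (n : ℝ) ^ d).trans_le
    (hlower n hn))).2.ne

lemma pos_of_growth_bounds (hc₁ : 0 < c₁)
    (hlower : ∀ n : ℕ, 1 ≤ n → c₁ * (n : ℝ) ^ d ≤ m.real (V ^ n))
    (hupper : ∀ n : ℕ, 1 ≤ n → m.real (V ^ n) ≤ c₂ * (n : ℝ) ^ d) : 0 < c₂ := by
  have h := (hlower 1 le_rfl).trans (hupper 1 le_rfl)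
  simp only [Nat.cast_one, one_pow, mul_one] at h
  exact hc₁.trans_le h

lemma measure_wordBall_ne_top (hsymm : V⁻¹ = V) (hgen : ⋃ n : ℕ, V ^ (n + 1) = univ)
    (hc₁ : 0 < c₁) (hlower : ∀ n : ℕ, 1 ≤ n → c₁ * (n : ℝ) ^ d ≤ m.real (V ^ n))
    {r : ℝ} (hr : 1 ≤ r) : m (wordBall V r) ≠ ∞ := by
  have h1 : 1 ≤ ⌊r⌋₊ := Nat.one_le_floor_iff _ |>.mpr hr
  exact measure_ne_top_of_subset (wordBall_subset_pow_union hsymm hgen r)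
    (measure_union_ne_top (measure_pow_ne_top hc₁ hlower h1)
      (measure_pow_ne_top hc₁ hlower (by omega)))

lemma le_measureReal_wordBall (hsymm : V⁻¹ = V) (hgen : ⋃ n : ℕ, V ^ (n + 1) = univ)
    (hc₁ : 0 < c₁) (hlower : ∀ n : ℕ, 1 ≤ n → c₁ * (n : ℝ) ^ d ≤ m.real (V ^ n))
    {r : ℝ} (hr : 1 ≤ r) : c₁ * (⌊r⌋₊ : ℝ) ^ d ≤ m.real (wordBall V r) :=
  (hlower _ (Nat.one_le_floor_iff _ |>.mpr hr)).trans <|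
    measureReal_mono (pow_subset_wordBall (Nat.floor_le (by linarith)))
      (measure_wordBall_ne_top hsymm hgen hc₁ hlower hr)

lemma measureReal_wordBall_le (hsymm : V⁻¹ = V) (hgen : ⋃ n : ℕ, V ^ (n + 1) = univ)
    (hc₁ : 0 < c₁) (hlower : ∀ n : ℕ, 1 ≤ n → c₁ * (n : ℝ) ^ d ≤ m.real (V ^ n))
    (hupper : ∀ n : ℕ, 1 ≤ n → m.real (V ^ n) ≤ c₂ * (n : ℝ) ^ d)
    {r : ℝ} (hr : 1 ≤ r) : m.real (wordBall V r) ≤ 2 * c₂ * (r + 1) ^ d := by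
  set a := ⌊r⌋₊
  have ha : 1 ≤ a := Nat.one_le_floor_iff _ |>.mpr hr
  have har : (a : ℝ) ≤ r := Nat.floor_le (by linarith)
  have hc₂ := pos_of_growth_bounds hc₁ hlower hupper
  calc m.real (wordBall V r) ≤ m.real (V ^ a ∪ V ^ (a + 1)) :=
        measureReal_mono (wordBall_subset_pow_union hsymm hgen r) <|
          measure_union_ne_top (measure_pow_ne_top hc₁ hlower ha)
            (measure_pow_ne_top hc₁ hlower (by omega))
    _ ≤ m.real (V ^ a) + m.real (V ^ (a + 1)) := measureReal_union_le _ _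
    _ ≤ c₂ * (a : ℝ) ^ d + c₂ * ((a : ℝ) + 1) ^ d := by
        gcongr
        · exact hupper a ha
        · exact_mod_cast hupper (a + 1) (by omega)
    _ ≤ c₂ * (r + 1) ^ d + c₂ * (r + 1) ^ d := by gcongr; linarith
    _ = 2 * c₂ * (r + 1) ^ d := by ring

end Growth

lemma sqrt_add_one_le_three_mul {n k : ℕ} (hn : 1 ≤ n) (hk : k ≤ 2 * n ^ 2) :
    Real.sqrt k + 1 ≤ 3 * n := by
  have hn' : (1 : ℝ) ≤ n := by exact_mod_cast hn
  have hk' : (k : ℝ) ≤ (2 * n) ^ 2 := by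
    have : (k : ℝ) ≤ 2 * (n : ℝ) ^ 2 := by exact_mod_cast hk
    nlinarith
  have := Real.sqrt_le_left (by positivity) |>.mpr hk'
  linarith

lemma convPow_nonneg {G : Type*} [Group G] [MeasurableSpace G] {m : Measure G} {f : G → ℝ}
    {fconv : ℕ → G → ℝ} (hf0 : ∀ g, 0 ≤ f g) (hconv1 : fconv 1 = f)
    (hconv : ∀ (k : ℕ) (g : G), fconv (k + 1) g = ∫ h, f h * fconv k (h⁻¹ * g) ∂m)
    {k : ℕ} (hk : 1 ≤ k) (g : G) : 0 ≤ fconv k g := by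
  induction k, hk using Nat.le_induction generalizing g with
  | base => exact hconv1 ▸ hf0 g
  | succ k _ ih => exact hconv k g ▸ integral_nonneg fun h => mul_nonneg (hf0 h) (ih _)

lemma mul_le_sum_Icc_two_mul {u : ℕ → ℝ} {a : ℝ} (M : ℕ)
    (hu : ∀ k ∈ Finset.Icc 1 (2 * M), 0 ≤ u k) (hua : ∀ k ∈ Finset.Icc (M + 1) (2 * M), a ≤ u k) :
    M * a ≤ ∑ k ∈ Finset.Icc 1 (2 * M), u k := by
  have hcard : (Finset.Icc (M + 1) (2 * M)).card = M := by simp; omega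
  calc (M : ℝ) * a = (Finset.Icc (M + 1) (2 * M)).card • a := by rw [hcard, nsmul_eq_mul]
    _ ≤ ∑ k ∈ Finset.Icc (M + 1) (2 * M), u k := Finset.card_nsmul_le_sum _ _ _ hua
    _ ≤ ∑ k ∈ Finset.Icc 1 (2 * M), u k :=
        Finset.sum_le_sum_of_subset_of_nonneg (Finset.Icc_subset_Icc (by omega) le_rfl)
          fun k hk _ => hu k hk

lemma le_convPow_of_gaussian_lower_bound {G : Type*} [Group G] [MeasurableSpace G]
    {m : Measure G} {V : Set G} {c₁ c₂ c : ℝ} {d : ℕ} {fconv : ℕ → G → ℝ}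
    (hsymm : V⁻¹ = V) (hgen : ⋃ n : ℕ, V ^ (n + 1) = univ)
    (hc₁ : 0 < c₁) (hlower : ∀ n : ℕ, 1 ≤ n → c₁ * (n : ℝ) ^ d ≤ m.real (V ^ n))
    (hupper : ∀ n : ℕ, 1 ≤ n → m.real (V ^ n) ≤ c₂ * (n : ℝ) ^ d) (hc : 0 ≤ c)
    (hgauss : ∀ k : ℕ, 1 ≤ k → ∀ g ∈ wordBall V k,
      c * Real.exp (-((wordLength V g : ℝ) ^ 2 / k)) / m.real (wordBall V (Real.sqrt k))
        ≤ fconv k g)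
    {n k : ℕ} (hn : 1 ≤ n) (hk : k ∈ Finset.Icc (n ^ 2 + 1) (2 * n ^ 2))
    {g : G} (hg : g ∈ wordBall V n) :
    c * Real.exp (-1) / (2 * 3 ^ d * c₂ * n ^ d) ≤ fconv k g := by
  obtain ⟨hk1, hk2⟩ := Finset.mem_Icc.mp hk
  have hn' : (1 : ℝ) ≤ n := by exact_mod_cast hn
  have hnk : (n : ℝ) ^ 2 ≤ k := by exact_mod_cast (by omega : n ^ 2 ≤ k)
  have hgn : (wordLength V g : ℝ) ≤ n := hg
  have hgk : g ∈ wordBall V k := hgn.trans (by nlinarith)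
  have hsqrt : 1 ≤ Real.sqrt k := Real.one_le_sqrt.mpr (by exact_mod_cast (by omega : 1 ≤ k))
  have hfloor : (1 : ℝ) ≤ ⌊Real.sqrt k⌋₊ := by exact_mod_cast Nat.one_le_floor_iff _ |>.mpr hsqrt
  have hvol_pos : 0 < m.real (wordBall V (Real.sqrt k)) :=
    (by positivity : 0 < c₁ * (⌊Real.sqrt k⌋₊ : ℝ) ^ d).trans_le
      (le_measureReal_wordBall hsymm hgen hc₁ hlower hsqrt)
  have hc₂ := pos_of_growth_bounds hc₁ hlower hupper
  have hvol : m.real (wordBall V (Real.sqrt k)) ≤ 2 * 3 ^ d * c₂ * n ^ d :=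
    calc m.real (wordBall V (Real.sqrt k)) ≤ 2 * c₂ * (Real.sqrt k + 1) ^ d :=
          measureReal_wordBall_le hsymm hgen hc₁ hlower hupper hsqrt
      _ ≤ 2 * c₂ * (3 * n) ^ d := by gcongr; exact sqrt_add_one_le_three_mul hn hk2
      _ = 2 * 3 ^ d * c₂ * n ^ d := by ring
  have hexp : Real.exp (-1) ≤ Real.exp (-((wordLength V g : ℝ) ^ 2 / k)) :=
    Real.exp_le_exp.mpr <| neg_le_neg <| (div_le_one (by nlinarith)).mpr <| by
      nlinarith [Nat.cast_nonneg (α := ℝ) (wordLength V g)]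
  calc c * Real.exp (-1) / (2 * 3 ^ d * c₂ * n ^ d)
      ≤ c * Real.exp (-((wordLength V g : ℝ) ^ 2 / k)) / m.real (wordBall V (Real.sqrt k)) := by
        gcongr
    _ ≤ fconv k g := hgauss k (by omega) g hgk

theorem stmt3_general
    (G : Type*) [Group G]
    [MeasurableSpace G]
    (m : Measure G)
    (V : Set G) (hVsymm : V⁻¹ = V) (hVgen : ⋃ n : ℕ, V ^ (n + 1) = univ)
    -- word metric: `D g` is the word length of `g`, `B r` the closed ball of radius `r`
    (D : G → ℕ) (hD : ∀ g : G, D g = sInf {n : ℕ | g ∈ V ^ n})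
    (B : ℝ → Set G) (hB : ∀ r : ℝ, B r = {g : G | (D g : ℝ) ≤ r})
    -- polynomial growth with matching exponents
    (c₁ c₂ : ℝ) (d : ℕ) (hc₁ : 0 < c₁)
    (hupper : ∀ n : ℕ, 1 ≤ n → (m (V ^ n)).toReal ≤ c₂ * (n : ℝ) ^ d)
    (hlower : ∀ n : ℕ, 1 ≤ n → c₁ * (n : ℝ) ^ d ≤ (m (V ^ n)).toReal)
    -- the density `f` and its convolution powers
    (f : G → ℝ) (hf0 : ∀ g, 0 ≤ f g)
    (fconv : ℕ → G → ℝ)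
    (hconv1 : fconv 1 = f)
    (hconv : ∀ (k : ℕ) (g : G), fconv (k + 1) g = ∫ h, f h * fconv k (h⁻¹ * g) ∂m)
    -- the Gaussian lower bound of Hebisch–Saloff-Coste
    (c : ℝ) (hc : 0 < c)
    (hgauss : ∀ k : ℕ, 1 ≤ k → ∀ g ∈ B (k : ℝ),
      c * Real.exp (-((D g : ℝ) ^ 2 / (k : ℝ))) / (m (B (Real.sqrt (k : ℝ)))).toReal
        ≤ fconv k g) :
    ∃ c' : ℝ, 0 < c' ∧ ∃ N : ℕ, ∀ n : ℕ, N ≤ n → ∀ g : G,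
      indicator (B (n : ℝ)) (fun _ => (1 : ℝ)) g / (m (B (n : ℝ))).toReal
        ≤ c' / (2 * (n : ℝ) ^ 2) * ∑ k ∈ Finset.Icc 1 (2 * n ^ 2), fconv k g := by
  obtain rfl : D = wordLength V := funext hD
  obtain rfl : B = wordBall V := funext hB
  have hc₂ := pos_of_growth_bounds hc₁ hlower hupper
  have hconv_nonneg {N k : ℕ} (hk : k ∈ Finset.Icc 1 N) (g : G) : 0 ≤ fconv k g :=
    convPow_nonneg hf0 hconv1 hconv (Finset.mem_Icc.mp hk).1 g
  refine ⟨4 * 3 ^ d * c₂ * Real.exp 1 / (c * c₁), by positivity, 1, fun n hn g => ?_⟩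
  by_cases hg : g ∈ wordBall V n
  · rw [indicator_of_mem hg]
    have hn' : (0 : ℝ) < n := by exact_mod_cast hn
    have hball : c₁ * (n : ℝ) ^ d ≤ m.real (wordBall V n) := by
      simpa using le_measureReal_wordBall hVsymm hVgen hc₁ hlower (r := n) (by exact_mod_cast hn)
    have hsum := mul_le_sum_Icc_two_mul (n ^ 2) (fun k hk => hconv_nonneg hk g) fun k hk =>
      le_convPow_of_gaussian_lower_bound hVsymm hVgen hc₁ hlower hupper hc.le hgauss hn hk hg
    calc 1 / m.real (wordBall V n) ≤ 1 / (c₁ * n ^ d) :=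
          one_div_le_one_div_of_le (by positivity) hball
      _ = 4 * 3 ^ d * c₂ * Real.exp 1 / (c * c₁) / (2 * n ^ 2) *
            ((n ^ 2 : ℕ) * (c * Real.exp (-1) / (2 * 3 ^ d * c₂ * n ^ d))) := by
        rw [Real.exp_neg]; push_cast; field_simp; ring
      _ ≤ _ := by gcongr
  · rw [indicator_of_notMem hg, zero_div]
    exact mul_nonneg (by positivity) (Finset.sum_nonneg fun k hk => hconv_nonneg hk g)

/-- Lemma 4.9 of the paper: on a group of (two-sided) polynomial growth, a symmetric
probability density `f` satisfying the Hebisch–Saloff-Coste Gaussian lower bound dominates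
the normalized indicator of the ball `B_n` by the Cesŕro average of its convolution powers,
for all sufficiently large `n`. -/
theorem stmt3
    (G : Type*) [Group G] [TopologicalSpace G] [IsTopologicalGroup G]
    [MeasurableSpace G] [BorelSpace G]
    (m : Measure G) [m.IsMulRightInvariant]
    (V : Set G) (hVsymm : V⁻¹ = V) (hVcpt : IsCompact V) (hVgen : ⋃ n : ℕ, V ^ (n + 1) = univ)
    -- word metric: `D g` is the word length of `g`, `B r` the closed ball of radius `r`
    (D : G → ℕ) (hD : ∀ g : G, D g = sInf {n : ℕ | g ∈ V ^ n})
    (B : ℝ → Set G) (hB : ∀ r : ℝ, B r = {g : G | (D g : ℝ) ≤ r})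
    -- polynomial growth with matching exponents
    (k₀ c₁ c₂ : ℝ) (d : ℕ) (hk₀ : 0 < k₀) (hc₁ : 0 < c₁) (hc₂ : 0 < c₂)
    (hfinB : ∀ n : ℕ, 1 ≤ n → m (V ^ n) < ∞)
    (hupper : ∀ n : ℕ, 1 ≤ n → (m (V ^ n)).toReal ≤ c₂ * (n : ℝ) ^ d)
    (hlower : ∀ n : ℕ, 1 ≤ n → c₁ * (n : ℝ) ^ d ≤ (m (V ^ n)).toReal)
    (hgrowth : ∀ n : ℕ, 1 ≤ n → (m (V ^ n)).toReal ≤ k₀ * (n : ℝ) ^ d)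
    -- the density `f` and its convolution powers
    (f : G → ℝ) (hf0 : ∀ g, 0 ≤ f g) (hfint : ∫ g, f g ∂m = 1)
    (hfsymm : ∀ g, f g⁻¹ = f g)
    (hfsupp : IsCompact (closure {g | f g ≠ 0})) (hVsupp : V ⊆ closure {g | f g ≠ 0})
    (fconv : ℕ → G → ℝ)
    (hconv1 : fconv 1 = f)
    (hconv : ∀ (k : ℕ) (g : G), fconv (k + 1) g = ∫ h, f h * fconv k (h⁻¹ * g) ∂m)
    -- the Gaussian lower bound of Hebisch–Saloff-Coste
    (c : ℝ) (hc : 0 < c)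
    (hgauss : ∀ k : ℕ, 1 ≤ k → ∀ g ∈ B (k : ℝ),
      c * Real.exp (-((D g : ℝ) ^ 2 / (k : ℝ))) / (m (B (Real.sqrt (k : ℝ)))).toReal
        ≤ fconv k g) :
    ∃ c' : ℝ, 0 < c' ∧ ∃ N : ℕ, ∀ n : ℕ, N ≤ n → ∀ g : G,
      indicator (B (n : ℝ)) (fun _ => (1 : ℝ)) g / (m (B (n : ℝ))).toReal
        ≤ c' / (2 * (n : ℝ) ^ 2) * ∑ k ∈ Finset.Icc 1 (2 * n ^ 2), fconv k g :=
  stmt3_general G m V hVsymm hVgen D hD B hB c₁ c₂ d hc₁ hupper hlower f hf0 fconv hconv1 hconv c hc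
    hgauss
end

section
/- For the group ℤ^d with the word metric (ℓ^∞ distance, i.e. balls are cubes) and counting measure, there exist d+1 families of nested dyadic-type partitions 𝒫⁰,…,𝒫^d of ℤ^d, each 𝒫^i = (𝒫^i_{-k})_{k≥0} being a sequence of partitions into dyadic cubes of side 2^k translated by the shifts α_k^{(i)} = Σ_{j=0}^{k-1} 2^j ξ_j^{(i)} mod 2^k, where ξ^{(i)}_{(d+1)n+l} = δ_{i,l} (n ≥ 0, 0 ≤ l ≤ d), with 𝒫^i_{-(k+1)} coarsening 𝒫^i_{-k}, such that for every point x ∈ ℤ^d and radius r > 0, there exist an index 0 ≤ i ≤ d, a level k, and a cube Q in 𝒫^i_{-k} with B(x,r) ⊆ Q and |Q| ≤ 2^{3d(d+2)} |B(x,r)|. -/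
open Set

namespace Stmt6Aux

/-- sum of `2^j` over `j < n` with `j % m = c`, as an integer -/
def S (m c n : ℕ) : ℤ := ∑ j' ∈ Finset.range n, 2 ^ j' * (if j' % m = c then 1 else 0)

lemma S_nonneg (m c n : ℕ) : 0 ≤ S m c n :=
  Finset.sum_nonneg fun j _ => by positivity

lemma S_succ (m c n : ℕ) : S m c (n + 1) = S m c n + 2 ^ n * (if n % m = c then 1 else 0) :=
  Finset.sum_range_succ _ n

lemma S_bound (m c : ℕ) (hm : 2 ≤ m) : ∀ n, 3 * S m c n ≤ 2 ^ (n + 1) := by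
  intro n
  induction n using Nat.strong_induction_on with
  | _ n ih =>
    match n, ih with
    | 0, _ => simp [S]
    | 1, _ =>
      rw [S_succ]
      have : S m c 0 = 0 := by simp [S]
      rw [this]
      split <;> norm_num
    | (n + 2), ih =>
      rw [S_succ]
      by_cases h : (n + 1) % m = c
      · have h2 : ¬ (n % m = c) := by
          intro h'
          have : (n + 1) ≡ n [MOD m] := h.trans h'.symm
          have : m ∣ (n + 1) - n := (Nat.modEq_iff_dvd' (Nat.le_succ n)).mp this.symm
          simp at this
          omega
        have e1 : S m c (n + 1) = S m c n := by rw [S_succ]; simp [h2]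
        have e2 := ih n (by omega)
        rw [e1, if_pos h]
        have : (2:ℤ) ^ (n + 2 + 1) = 2 ^ (n + 1) + 3 * 2 ^ (n + 1) := by ring
        rw [this]
        have h3 : (3:ℤ) * (2 ^ (n+1) * 1) = 3 * 2 ^ (n+1) := by ring
        linarith
      · have e2 := ih (n + 1) (by omega)
        rw [if_neg h]
        have : (2:ℤ) ^ (n + 1 + 1) ≤ 2 ^ (n + 2 + 1) := by
          apply pow_le_pow_right₀ (by norm_num); omega
        linarith

lemma window_unique {m a j p : ℕ} (hm : 0 < m) (hj : a ≤ j) (hj2 : j < a + m)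
    (hp : a ≤ p) (hp2 : p < a + m) (h : j % m = p % m) : j = p := by
  rcases le_total j p with hle | hle
  · have hd : m ∣ p - j := (Nat.modEq_iff_dvd' hle).mp h
    have := Nat.eq_zero_of_dvd_of_lt hd
    omega
  · have hd : m ∣ j - p := (Nat.modEq_iff_dvd' hle).mp h.symm
    have := Nat.eq_zero_of_dvd_of_lt hd
    omega

/-- position of the unique `j ≡ c [MOD m]` in the window `[k+1, k+m]` -/
def pos (m c k : ℕ) : ℕ := m * ((k + m - c) / m) + c

lemma pos_mod {m c : ℕ} (hc : c < m) (k : ℕ) : pos m c k % m = c := by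
  unfold pos
  rw [Nat.mul_add_mod]
  exact Nat.mod_eq_of_lt hc

lemma pos_lb {m c : ℕ} (hc : c < m) (k : ℕ) : k + 1 ≤ pos m c k := by
  unfold pos
  have h1 := Nat.div_add_mod (k + m - c) m
  have h2 := Nat.mod_lt (k + m - c) (show 0 < m by omega)
  omega

lemma pos_ub {m c : ℕ} (hc : c < m) (k : ℕ) : pos m c k ≤ k + m := by
  unfold pos
  have h1 := Nat.div_add_mod (k + m - c) m
  have h2 := Nat.mod_lt (k + m - c) (show 0 < m by omega)
  omega

lemma S_split {m c : ℕ} (hc : c < m) (hm : 2 ≤ m) (k : ℕ) :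
    S m c (k + 1 + m) = S m c (k + 1) + 2 ^ pos m c k := by
  unfold S
  rw [Finset.range_eq_Ico, ← Finset.sum_Ico_consecutive _ (Nat.zero_le (k+1)) (Nat.le_add_right (k+1) m)]
  rw [← Finset.range_eq_Ico]
  congr 1
  rw [Finset.sum_eq_single_of_mem (pos m c k)]
  · rw [if_pos (pos_mod hc k), mul_one]
  · rw [Finset.mem_Ico]
    exact ⟨pos_lb hc k, by have := pos_ub hc k; omega⟩
  · intro j hj hne
    rw [Finset.mem_Ico] at hj
    rw [if_neg, mul_zero]
    intro h
    exact hne (window_unique (show 0 < m by omega) hj.1 (by omega)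
      (pos_lb hc k) (by have := pos_ub hc k; omega) (by rw [h, pos_mod hc]))

lemma core' (m k : ℕ) (hm : 2 ≤ m) (c c' : ℕ) (hc : c < m) (hc' : c' < m)
    (hlt : pos m c' k < pos m c k) (z : ℤ)
    (hdvd : (2:ℤ) ^ (k + 1 + m) ∣ z - (S m c (k + 1 + m) - S m c' (k + 1 + m)))
    (hz : 3 * |z| < 2 ^ (k + 1)) : False := by
  set p := pos m c k with hp
  set q := pos m c' k with hq
  have hq1 : k + 1 ≤ q := pos_lb hc' k
  have hp2 : p ≤ k + m := pos_ub hc k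
  have hK : q + 1 ≤ k + 1 + m := by omega
  have hqp : q + 1 ≤ p := hlt
  rw [S_split hc hm k, S_split hc' hm k] at hdvd
  set w : ℤ := S m c (k + 1) - S m c' (k + 1) - 2 ^ q with hw
  have hzw : (2:ℤ) ^ (q + 1) ∣ z - w := by
    have h1 : (2:ℤ) ^ (q + 1) ∣ z - (S m c (k+1) + 2 ^ p - (S m c' (k+1) + 2 ^ q)) :=
      dvd_trans (pow_dvd_pow 2 hK) hdvd
    have h2 : (2:ℤ) ^ (q + 1) ∣ 2 ^ p := pow_dvd_pow 2 hqp
    have : z - w = z - (S m c (k+1) + 2 ^ p - (S m c' (k+1) + 2 ^ q)) + 2 ^ p := by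
      rw [hw]; ring
    rw [this]
    exact dvd_add h1 h2
  obtain ⟨s, hs⟩ := hzw
  have hA := S_bound m c hm (k + 1)
  have hA' := S_bound m c' hm (k + 1)
  have hA0 := S_nonneg m c (k + 1)
  have hA0' := S_nonneg m c' (k + 1)
  have hpowq : (2:ℤ) ^ (k + 1) ≤ 2 ^ q := pow_le_pow_right₀ (by norm_num) hq1
  have he1 : (2:ℤ) ^ (k + 1 + 1) = 2 * 2 ^ (k + 1) := by ring
  have hq2 : (2:ℤ) ^ (q + 1) = 2 * 2 ^ q := by ring
  have hqpos : (0:ℤ) < 2 ^ q := by positivity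
  rcases le_or_gt s 0 with hs0 | hs0
  · -- z ≤ w ≤ -2^(k+1)/3
    have h1 : (2:ℤ) ^ (q + 1) * s ≤ 0 :=
      mul_nonpos_of_nonneg_of_nonpos (by positivity) hs0
    have h2 : z ≤ w := by linarith [hs]
    have h3 : 3 * w ≤ - 2 ^ (k + 1) := by
      rw [hw]; rw [he1] at hA; linarith
    rcases abs_cases z with ⟨ha, _⟩ | ⟨ha, _⟩ <;> linarith
  · -- s ≥ 1
    have hs1 : (1:ℤ) ≤ s := hs0
    have h1 : (2:ℤ) ^ (q + 1) ≤ 2 ^ (q + 1) * s := le_mul_of_one_le_right (by positivity) hs1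
    have h2 : w + 2 ^ (q + 1) ≤ z := by linarith [hs]
    have h3 : 2 ^ (k + 1) ≤ 3 * (w + 2 ^ (q + 1)) := by
      rw [hw, hq2]; rw [he1] at hA'; linarith
    rcases abs_cases z with ⟨ha, _⟩ | ⟨ha, _⟩ <;> linarith

lemma core (m k : ℕ) (hm : 2 ≤ m) (c c' : ℕ) (hc : c < m) (hc' : c' < m)
    (hne : c ≠ c') (z : ℤ)
    (hdvd : (2:ℤ) ^ (k + 1 + m) ∣ z - (S m c (k + 1 + m) - S m c' (k + 1 + m)))
    (hz : 3 * |z| < 2 ^ (k + 1)) : False := by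
  have hpq : pos m c k ≠ pos m c' k := by
    intro h
    apply hne
    rw [← pos_mod hc k, ← pos_mod hc' k, h]
  rcases hpq.lt_or_gt with h | h
  · refine core' m k hm c' c hc' hc h (-z) ?_ (by rwa [abs_neg])
    have : -z - (S m c' (k+1+m) - S m c (k+1+m)) = -(z - (S m c (k+1+m) - S m c' (k+1+m))) := by
      ring
    rw [this]
    exact dvd_neg.mpr hdvd
  · exact core' m k hm c c' hc hc' h z hdvd hz

/-- corner of the cell of the grid `c + 2^k ℤ` containing `t` -/
def corner (c : ℤ) (k : ℕ) (t : ℤ) : ℤ := c + 2 ^ k * ((t - c) / 2 ^ k)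

lemma corner_mod (c : ℤ) (k : ℕ) (t : ℤ) : corner c k t % 2 ^ k = c % 2 ^ k := by
  unfold corner; apply Int.add_mul_emod_self_left

lemma sub_corner (c : ℤ) (k : ℕ) (t : ℤ) : t - corner c k t = (t - c) % 2 ^ k := by
  rw [Int.emod_def, corner]; ring

lemma corner_le (c : ℤ) (k : ℕ) (t : ℤ) : corner c k t ≤ t := by
  have h1 := sub_corner c k t
  have h2 : (0:ℤ) ≤ (t - c) % 2 ^ k := Int.emod_nonneg _ (by positivity)
  linarith

lemma lt_corner_add (c : ℤ) (k : ℕ) (t : ℤ) : t < corner c k t + 2 ^ k := by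
  have h1 := sub_corner c k t
  have h2 : (t - c) % 2 ^ k < 2 ^ k := Int.emod_lt_of_pos _ (by positivity)
  linarith

lemma corner_mono (c : ℤ) (k : ℕ) {s t : ℤ} (h : s ≤ t) : corner c k s ≤ corner c k t := by
  unfold corner
  have := Int.ediv_le_ediv (show (0:ℤ) < 2 ^ k by positivity) (sub_le_sub_right h c)
  nlinarith [pow_pos (show (0:ℤ) < 2 by norm_num) k]

lemma corner_eq_of_mem (c : ℤ) (k : ℕ) {a t : ℤ} (hmod : a % 2 ^ k = c % 2 ^ k)
    (h1 : a ≤ t) (h2 : t < a + 2 ^ k) : corner c k t = a := by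
  have hd : (2:ℤ) ^ k ∣ corner c k t - a := by
    have h : corner c k t ≡ a [ZMOD 2 ^ k] := (corner_mod c k t).trans hmod.symm
    exact dvd_sub_comm.mp (Int.ModEq.dvd h)
  have hb1 := corner_le c k t
  have hb2 := lt_corner_add c k t
  have : corner c k t - a = 0 := by
    refine Int.eq_zero_of_abs_lt_dvd hd ?_
    rw [abs_lt]
    constructor <;> linarith
  linarith

variable (d : ℕ)

/-- the shift `α_k^{(i)}` -/
def alpha (i : Fin (d + 1)) (k : ℕ) : ℤ := S (d + 1) (i : ℕ) k

def cube (a : Fin d → ℤ) (k : ℕ) : Set (Fin d → ℤ) :=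
  {y : Fin d → ℤ | ∀ j : Fin d, a j ≤ y j ∧ y j < a j + 2 ^ k}

/-- the partition family -/
def Pf (i : Fin (d + 1)) (k : ℕ) : Set (Set (Fin d → ℤ)) :=
  {Q | ∃ a : Fin d → ℤ, (∀ j, a j % (2 ^ k : ℤ) = alpha d i k % 2 ^ k) ∧ Q = cube d a k}

lemma mem_cube_corner (c : ℤ) (k : ℕ) (y : Fin d → ℤ) :
    y ∈ cube d (fun j => corner c k (y j)) k :=
  fun j => ⟨corner_le c k (y j), lt_corner_add c k (y j)⟩

lemma Pf_union (i : Fin (d + 1)) (k : ℕ) : ⋃₀ Pf d i k = univ := by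
  ext y
  simp only [mem_sUnion, mem_univ, iff_true]
  exact ⟨cube d (fun j => corner (alpha d i k) k (y j)) k,
    ⟨_, fun j => corner_mod _ _ _, rfl⟩, mem_cube_corner d _ k y⟩

lemma cube_corner_eq (k : ℕ) {a a' : Fin d → ℤ}
    (hm : ∀ j, a j % (2 ^ k : ℤ) = a' j % 2 ^ k)
    {y : Fin d → ℤ} (hy : y ∈ cube d a k) (hy' : y ∈ cube d a' k) : a = a' := by
  funext j
  obtain ⟨h1, h2⟩ := hy j
  obtain ⟨h3, h4⟩ := hy' j
  have hd : (2:ℤ) ^ k ∣ a' j - a j := Int.ModEq.dvd (hm j)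
  have : a' j - a j = 0 := by
    refine Int.eq_zero_of_abs_lt_dvd hd ?_
    rw [abs_lt]; constructor <;> linarith
  linarith

lemma Pf_disjoint (i : Fin (d + 1)) (k : ℕ) :
    ∀ Q ∈ Pf d i k, ∀ Q' ∈ Pf d i k, Q ≠ Q' → Disjoint Q Q' := by
  rintro Q ⟨a, ha, rfl⟩ Q' ⟨a', ha', rfl⟩ hne
  rw [Set.disjoint_left]
  intro y hy hy'
  exact hne (by rw [cube_corner_eq d k (fun j => (ha j).trans (ha' j).symm) hy hy'])

lemma alpha_succ_mod (i : Fin (d + 1)) (k : ℕ) :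
    alpha d i (k + 1) % 2 ^ k = alpha d i k % 2 ^ k := by
  unfold alpha
  rw [S_succ]
  rcases ite_eq_or_eq (k % (d+1) = (i:ℕ)) (1:ℤ) 0 with h | h <;> rw [h]
  · apply Int.add_mul_emod_self_left
  · rw [mul_zero, add_zero]

lemma Pf_nested (i : Fin (d + 1)) (k : ℕ) :
    ∀ Q ∈ Pf d i k, ∃ Q' ∈ Pf d i (k + 1), Q ⊆ Q' := by
  rintro Q ⟨a, ha, rfl⟩
  set b : Fin d → ℤ := fun j => corner (alpha d i (k+1)) (k+1) (a j) with hb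
  refine ⟨cube d b (k + 1), ⟨b, fun j => corner_mod _ _ _, rfl⟩, ?_⟩
  intro y hy j
  obtain ⟨h1, h2⟩ := hy j
  have hb1 : b j ≤ a j := corner_le _ _ _
  have hb2 : a j < b j + 2 ^ (k + 1) := lt_corner_add _ _ _
  have hdvd : (2:ℤ) ^ k ∣ a j - b j := by
    have m1 : a j ≡ alpha d i k [ZMOD 2 ^ k] := ha j
    have m2 : alpha d i (k+1) ≡ alpha d i k [ZMOD 2 ^ k] := alpha_succ_mod d i k
    have m3 : b j ≡ alpha d i (k+1) [ZMOD 2 ^ (k+1)] := corner_mod _ _ _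
    have m3' : b j ≡ alpha d i (k+1) [ZMOD 2 ^ k] :=
      Int.ModEq.of_dvd (pow_dvd_pow 2 (Nat.le_succ k)) m3
    have hab : a j ≡ b j [ZMOD 2 ^ k] := m1.trans (m3'.trans m2).symm
    exact dvd_sub_comm.mp (Int.ModEq.dvd hab)
  obtain ⟨t, ht⟩ := hdvd
  have hk0 : (0:ℤ) < 2 ^ k := by positivity
  have ht0 : 0 ≤ t := by nlinarith
  have ht1 : t ≤ 1 := by nlinarith [show (2:ℤ)^(k+1) = 2 * 2^k by ring]
  have : a j - b j ≤ 2 ^ k := by nlinarith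
  constructor
  · linarith
  · have : (2:ℤ) ^ (k + 1) = 2 ^ k + 2 ^ k := by ring
    linarith

lemma exists_boundary {N α u v : ℤ} (hN : 0 < N) (huv : u ≤ v)
    (hbad : (u - α) / N ≠ (v - α) / N) :
    ∃ b : ℤ, u < b ∧ b ≤ v ∧ b % N = α % N := by
  have hle : (u - α) / N ≤ (v - α) / N := Int.ediv_le_ediv hN (by linarith)
  have hlt : (u - α) / N < (v - α) / N := lt_of_le_of_ne hle hbad
  refine ⟨α + N * ((v - α) / N), ?_, ?_, by apply Int.add_mul_emod_self_left⟩
  · have h1 : u - α - N * ((u - α) / N) = (u - α) % N := by rw [Int.emod_def]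
    have h2 : (u - α) % N < N := Int.emod_lt_of_pos _ hN
    have h3 : N * ((u - α) / N + 1) ≤ N * ((v - α) / N) :=
      mul_le_mul_of_nonneg_left (by omega) hN.le
    nlinarith
  · have h1 : v - α - N * ((v - α) / N) = (v - α) % N := by rw [Int.emod_def]
    have h2 : (0:ℤ) ≤ (v - α) % N := Int.emod_nonneg _ hN.ne'
    linarith

lemma card_pi_Ixx {d : ℕ} (s : Fin d → Set ℤ) (t : Fin d → Finset ℤ)
    (h : ∀ j, s j = ↑(t j)) :
    Nat.card ↥(Set.univ.pi s) = ∏ j, (t j).card := by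
  rw [Nat.card_congr (Equiv.Set.univPi s), Nat.card_pi]
  congr 1
  funext j
  rw [h j]
  simp [Nat.card_eq_finsetCard]

lemma cube_card (d : ℕ) (a : Fin d → ℤ) (k : ℕ) :
    Nat.card ↥(cube d a k) = (2 ^ k) ^ d := by
  have h : cube d a k = Set.univ.pi (fun j => Set.Ico (a j) (a j + 2 ^ k)) := by
    ext y
    simp only [cube, mem_setOf_eq, Set.mem_univ_pi, Set.mem_Ico]
  rw [h, card_pi_Ixx _ (fun j => Finset.Ico (a j) (a j + 2 ^ k))
    (fun j => (Finset.coe_Ico _ _).symm)]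
  have : ∀ j : Fin d, (Finset.Ico (a j) (a j + 2 ^ k)).card = 2 ^ k := by
    intro j
    rw [Int.card_Ico]
    simp only [add_sub_cancel_left]
    rw [show ((2:ℤ)^k) = ((2^k : ℕ) : ℤ) by push_cast; ring, Int.toNat_natCast]
  rw [Finset.prod_congr rfl (fun j _ => this j), Finset.prod_const, Finset.card_univ,
    Fintype.card_fin]

lemma ball_card (d : ℕ) (x : Fin d → ℤ) (R : ℕ) :
    Nat.card ↥{y : Fin d → ℤ | ∀ j, x j - (R:ℤ) ≤ y j ∧ y j ≤ x j + (R:ℤ)}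
      = (2 * R + 1) ^ d := by
  have h : {y : Fin d → ℤ | ∀ j, x j - (R:ℤ) ≤ y j ∧ y j ≤ x j + (R:ℤ)}
      = Set.univ.pi (fun j => Set.Icc (x j - (R:ℤ)) (x j + R)) := by
    ext y
    simp only [mem_setOf_eq, Set.mem_univ_pi, Set.mem_Icc]
  rw [h, card_pi_Ixx _ (fun j => Finset.Icc (x j - (R:ℤ)) (x j + R))
    (fun j => (Finset.coe_Icc _ _).symm)]
  have : ∀ j : Fin d, (Finset.Icc (x j - (R:ℤ)) (x j + R)).card = 2 * R + 1 := by
    intro j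
    rw [Int.card_Icc]
    have : x j + (R:ℤ) + 1 - (x j - R) = 2 * R + 1 := by ring
    rw [this]
    omega
  rw [Finset.prod_congr rfl (fun j _ => this j), Finset.prod_const, Finset.card_univ,
    Fintype.card_fin]

end Stmt6Aux

open Stmt6Aux in
/-- Mei's dyadic covering construction on `ℤ^d` (remark after Lemma 4.2): there are `d+1`
nested families of partitions of `ℤ^d` into translated dyadic cubes such that every ball
(cube) `B(x,r)` for the `ℓ^∞` word metric is contained in a cube of one of the families of
comparable cardinality, with constant `2^{3d(d+2)}`. -/
theorem stmt6 (d : ℕ) (hd : 0 < d) :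
    ∃ P : Fin (d + 1) → ℕ → Set (Set (Fin d → ℤ)),
      -- each `P i k` is a partition of `ℤ^d`
      (∀ (i : Fin (d + 1)) (k : ℕ), ⋃₀ P i k = univ) ∧
      (∀ (i : Fin (d + 1)) (k : ℕ), ∀ Q ∈ P i k, ∀ Q' ∈ P i k, Q ≠ Q' → Disjoint Q Q') ∧
      -- the elements of `P i k` are translated dyadic cubes of side `2^k`
      (∀ (i : Fin (d + 1)) (k : ℕ), ∀ Q ∈ P i k, ∃ a : Fin d → ℤ,
        Q = {y : Fin d → ℤ | ∀ j : Fin d, a j ≤ y j ∧ y j < a j + 2 ^ k}) ∧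
      -- the cubes are obtained from the shifts `α_k^{(i)} = Σ_{j<k} 2^j ξ_j^{(i)} mod 2^k`,
      -- `ξ^{(i)}_{(d+1)n+l} = δ_{i,l}`: each cube has all its corners congruent to the shift
      (∀ (i : Fin (d + 1)) (k : ℕ), ∀ Q ∈ P i k, ∃ a : Fin d → ℤ,
        (∀ j : Fin d, a j % (2 ^ k : ℤ) =
          (∑ j' ∈ Finset.range k, 2 ^ j' * (if j' % (d + 1) = (i : ℕ) then 1 else 0)) %
            (2 ^ k : ℤ)) ∧
        Q = {y : Fin d → ℤ | ∀ j : Fin d, a j ≤ y j ∧ y j < a j + 2 ^ k}) ∧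
      -- nesting: `P i (k+1)` coarsens `P i k`
      (∀ (i : Fin (d + 1)) (k : ℕ), ∀ Q ∈ P i k, ∃ Q' ∈ P i (k + 1), Q ⊆ Q') ∧
      -- the covering property with constant `2^{3d(d+2)}`
      (∀ (x : Fin d → ℤ) (r : ℝ), 0 < r → ∃ (i : Fin (d + 1)) (k : ℕ), ∃ Q ∈ P i k,
        {y : Fin d → ℤ | ∀ j : Fin d, |((y j - x j : ℤ) : ℝ)| ≤ r} ⊆ Q ∧
        Nat.card Q ≤ 2 ^ (3 * d * (d + 2)) *
          Nat.card {y : Fin d → ℤ | ∀ j : Fin d, |((y j - x j : ℤ) : ℝ)| ≤ r}) := by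
  classical
  refine ⟨Pf d, Pf_union d, Pf_disjoint d, ?_, ?_, Pf_nested d, ?_⟩
  · rintro i k Q ⟨a, _, rfl⟩; exact ⟨a, rfl⟩
  · rintro i k Q ⟨a, ha, rfl⟩; exact ⟨a, ha, rfl⟩
  -- covering
  intro x r hr
  set R : ℕ := ⌊r⌋₊ with hR
  have hRfl : ((R : ℕ) : ℤ) = ⌊r⌋ := by rw [hR]; exact Int.natCast_floor_eq_floor hr.le
  have habs : ∀ n : ℤ, (|(n : ℝ)| ≤ r) ↔ |n| ≤ (R : ℤ) := fun n => by
    rw [← Int.cast_abs, ← Int.le_floor, hRfl]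
  have hball : {y : Fin d → ℤ | ∀ j : Fin d, |((y j - x j : ℤ) : ℝ)| ≤ r}
      = {y : Fin d → ℤ | ∀ j, x j - (R : ℤ) ≤ y j ∧ y j ≤ x j + (R : ℤ)} := by
    ext y
    simp only [mem_setOf_eq]
    exact forall_congr' fun j => (habs _).trans (abs_le.trans (by omega))
  set k0 := Nat.clog 2 (2 * R + 1) with hk0
  have hn1 : (2 * R + 1 : ℕ) ≤ 2 ^ k0 := Nat.le_pow_clog one_lt_two _
  have hn2 : (2 : ℕ) ^ k0 ≤ 2 * (2 * R + 1) := by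
    rcases Nat.eq_zero_or_pos R with h0 | h0
    · rw [hk0, h0]
      simp [Nat.clog_one_right]
    · have h3 : 1 < 2 * R + 1 := by omega
      have h4 := Nat.pow_pred_clog_lt_self one_lt_two h3
      have hk0pos : 0 < k0 := Nat.clog_pos one_lt_two (by omega)
      have h4' : (2:ℕ) ^ (k0 - 1) < 2 * R + 1 := by
        simpa [hk0, Nat.pred_eq_sub_one] using h4
      calc (2:ℕ) ^ k0 = 2 * 2 ^ (k0 - 1) := by
            rw [← pow_succ']; congr 1; omega
        _ ≤ 2 * (2 * R + 1) := by omega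
  set K := k0 + 1 + 1 + (d + 1) with hK
  have hN : (0 : ℤ) < 2 ^ K := by positivity
  have hn1' : (2 * (R:ℤ) + 1) ≤ 2 ^ k0 := by exact_mod_cast hn1
  -- at most one bad family per coordinate
  have key : ∀ (j : Fin d) (i i' : Fin (d + 1)), i ≠ i' →
      (x j - R - alpha d i K) / 2 ^ K ≠ (x j + R - alpha d i K) / 2 ^ K →
      (x j - R - alpha d i' K) / 2 ^ K ≠ (x j + R - alpha d i' K) / 2 ^ K → False := by
    intro j i i' hne hb hb'
    obtain ⟨b, hb1, hb2, hb3⟩ := exists_boundary hN (by omega) hb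
    obtain ⟨b', hb1', hb2', hb3'⟩ := exists_boundary hN (by omega) hb'
    refine core (d + 1) (k0 + 1) (by omega) (i : ℕ) (i' : ℕ) i.isLt i'.isLt
      (fun h => hne (Fin.val_injective h)) (b - b') ?_ ?_
    · have e1 : b - b' - (S (d+1) (i:ℕ) (k0+1+1+(d+1)) - S (d+1) (i':ℕ) (k0+1+1+(d+1)))
          = (alpha d i' K - b') - (alpha d i K - b) := by
        rw [hK]; unfold alpha; ring
      rw [show k0 + 1 + 1 + (d + 1) = K from hK.symm] at e1
      rw [e1, show (2:ℤ) ^ (k0 + 1 + 1 + (d+1)) = 2 ^ K by rw [hK]]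
      exact dvd_sub (Int.ModEq.dvd hb3') (Int.ModEq.dvd hb3)
    · have h5 : (2:ℤ) ^ (k0 + 1 + 1) = 4 * 2 ^ k0 := by ring
      rcases abs_cases (b - b') with ⟨ha, _⟩ | ⟨ha, _⟩ <;> rw [ha] <;> linarith
  have good : ∃ i : Fin (d + 1), ∀ j : Fin d,
      (x j - R - alpha d i K) / 2 ^ K = (x j + R - alpha d i K) / 2 ^ K := by
    by_contra hcon
    push_neg at hcon
    choose f hf using hcon
    obtain ⟨i, i', hne, heq⟩ := Fintype.exists_ne_map_eq_of_card_lt f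
      (by simpa using Nat.lt_succ_self d)
    exact key (f i) i i' hne (hf i) (heq ▸ hf i')
  obtain ⟨i, hi⟩ := good
  refine ⟨i, K, cube d (fun j => corner (alpha d i K) K (x j - R)) K,
    ⟨_, fun j => corner_mod _ _ _, rfl⟩, ?_, ?_⟩
  · rw [hball]
    intro y hy j
    obtain ⟨h1, h2⟩ := hy j
    have hc1 : corner (alpha d i K) K (x j - R) = corner (alpha d i K) K (x j + R) := by
      unfold corner; rw [hi j]
    have hm1 := corner_mono (alpha d i K) K h1
    have hm2 := corner_mono (alpha d i K) K h2
    have heq : corner (alpha d i K) K (y j) = corner (alpha d i K) K (x j - R) :=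
      le_antisymm (hc1 ▸ hm2) hm1
    refine ⟨?_, ?_⟩
    · have h := corner_le (alpha d i K) K (y j); rw [heq] at h; exact h
    · have h := lt_corner_add (alpha d i K) K (y j); rw [heq] at h; exact h
  · rw [hball, cube_card, ball_card]
    have h1 : (2 : ℕ) ^ K ≤ 2 ^ (d + 4) * (2 * R + 1) :=
      calc (2:ℕ) ^ K = 2 ^ (d + 3) * 2 ^ k0 := by rw [← pow_add]; congr 1; omega
        _ ≤ 2 ^ (d + 3) * (2 * (2 * R + 1)) := by gcongr
        _ = 2 ^ (d + 4) * (2 * R + 1) := by ring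
    calc ((2:ℕ) ^ K) ^ d ≤ (2 ^ (d + 4) * (2 * R + 1)) ^ d := Nat.pow_le_pow_left h1 d
      _ = 2 ^ ((d + 4) * d) * (2 * R + 1) ^ d := by rw [mul_pow, ← pow_mul]
      _ ≤ 2 ^ (3 * d * (d + 2)) * (2 * R + 1) ^ d := by
          have hle : (d + 4) * d ≤ 3 * d * (d + 2) := by nlinarith
          exact Nat.mul_le_mul_right _ (Nat.pow_le_pow_right (by norm_num) hle)
end
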